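/- If b(x)/x → λ as x → 0⁺ for some λ ∈ (0, ∞), then β·C(β) → 1/(λ·a) as β → 0⁺. -/

import Mathlib

open MeasureTheory Real Filter Set

/-- `C(β) = ∫₀¹ (1-x)⁻¹ exp(-∫₀ˣ b(aβy)/(1-y) dy) dx`. -/
noncomputable def Cfun (a : ℝ) (b : ℝ → ℝ) (β : ℝ) : ℝ :=
  ∫ x in (0:ℝ)..1, (1 - x)⁻¹ * Real.exp (-∫ y in (0:ℝ)..x, b (a * β * y) / (1 - y))

open scoped Topology

/-! Since `b` is nondecreasing, `b(aβδ) ≤ b(aβy) ≤ b(aβ)` for `y ∈ [δ, 1)`, so the inner integral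
is squeezed between multiples of `-log (1 - x)` and the integrand of `C(β)` between powers of
`1 - x`. Integrating gives `1 / b(aβ) ≤ C(β) ≤ (1 - δ)^(-b(aβδ)) / b(aβδ)` for every `δ ∈ (0, 1)`.
As `β → 0⁺`, `b(κβ) ~ λκβ` and `b(κβ) → 0`, so `β C(β)` is eventually above every number below
`1 / (λa)` and eventually below every number above `1 / (λaδ)`; letting `δ → 1` gives the limit. -/

theorem integral_inv_one_sub {s t : ℝ} (hs : s < 1) (ht : t < 1) :
    ∫ y in s..t, (1 - y)⁻¹ = log (1 - s) - log (1 - t) := by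
  rw [intervalIntegral.integral_comp_sub_left (fun u => u⁻¹),
    integral_inv (notMem_uIcc_of_lt (by linarith) (by linarith)),
    log_div (by linarith) (by linarith)]

theorem intervalIntegrable_one_sub_rpow {c : ℝ} (hc : 0 < c) :
    IntervalIntegrable (fun x : ℝ => (1 - x) ^ (c - 1)) volume 0 1 := by
  simpa using ((intervalIntegral.intervalIntegrable_rpow' (a := 0) (b := 1)
    (by linarith : -1 < c - 1)).comp_sub_left 1).symm

theorem integral_one_sub_rpow {c : ℝ} (hc : 0 < c) :
    ∫ x in (0:ℝ)..1, (1 - x) ^ (c - 1) = 1 / c := by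
  rw [intervalIntegral.integral_comp_sub_left (fun u => u ^ (c - 1)),
    integral_rpow (Or.inl (by linarith))]
  simp [hc.ne']

theorem inv_one_sub_mul_exp_eq_rpow {x δ : ℝ} (hx : x < 1) (hδ : δ < 1) (c : ℝ) :
    (1 - x)⁻¹ * exp (-(c * (log (1 - δ) - log (1 - x))))
      = (1 - δ) ^ (-c) * (1 - x) ^ (c - 1) := by
  have h1x : 0 < 1 - x := by linarith
  rw [rpow_def_of_pos (by linarith), rpow_sub h1x, rpow_one, rpow_def_of_pos h1x,
    div_eq_mul_inv, ← mul_assoc, ← exp_add]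
  ring_nf

noncomputable def Cintegrand (f : ℝ → ℝ) (x : ℝ) : ℝ :=
  (1 - x)⁻¹ * exp (-∫ y in (0:ℝ)..x, f y / (1 - y))

section Cintegrand

variable {f : ℝ → ℝ} {c δ s t x : ℝ}

theorem continuousOn_div_one_sub (hf : Continuous f) :
    ContinuousOn (fun y => f y / (1 - y)) (Iio 1) :=
  hf.continuousOn.div (by fun_prop) fun y hy => (sub_pos.2 hy).ne'

theorem intervalIntegrable_div_one_sub (hf : Continuous f) (hs : s < 1) (ht : t < 1) :
    IntervalIntegrable (fun y => f y / (1 - y)) volume s t :=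
  ((continuousOn_div_one_sub hf).mono fun _ hy => hy.2.trans_lt (max_lt hs ht)).intervalIntegrable

theorem integral_div_one_sub_le (hf : Continuous f) (hst : s ≤ t) (ht : t < 1)
    (hfc : ∀ y ∈ Icc s t, f y ≤ c) :
    ∫ y in s..t, f y / (1 - y) ≤ c * (log (1 - s) - log (1 - t)) := by
  have hs := hst.trans_lt ht
  calc ∫ y in s..t, f y / (1 - y)
      ≤ ∫ y in s..t, c / (1 - y) :=
        intervalIntegral.integral_mono_on hst (intervalIntegrable_div_one_sub hf hs ht)
          (intervalIntegrable_div_one_sub continuous_const hs ht) fun y hy =>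
            div_le_div_of_nonneg_right (hfc y hy) (by linarith [hy.2])
    _ = c * (log (1 - s) - log (1 - t)) := by
        simp_rw [div_eq_mul_inv, intervalIntegral.integral_const_mul, integral_inv_one_sub hs ht]

theorem le_integral_div_one_sub (hf : Continuous f) (hst : s ≤ t) (ht : t < 1)
    (hcf : ∀ y ∈ Icc s t, c ≤ f y) :
    c * (log (1 - s) - log (1 - t)) ≤ ∫ y in s..t, f y / (1 - y) := by
  have hs := hst.trans_lt ht
  calc c * (log (1 - s) - log (1 - t)) = ∫ y in s..t, c / (1 - y) := by
        simp_rw [div_eq_mul_inv, intervalIntegral.integral_const_mul, integral_inv_one_sub hs ht]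
    _ ≤ ∫ y in s..t, f y / (1 - y) :=
        intervalIntegral.integral_mono_on hst
          (intervalIntegrable_div_one_sub continuous_const hs ht)
          (intervalIntegrable_div_one_sub hf hs ht) fun y hy =>
            div_le_div_of_nonneg_right (hcf y hy) (by linarith [hy.2])

theorem mul_log_sub_le_integral_div_one_sub (hf : Continuous f) (hf0 : ∀ y ∈ Ico 0 1, 0 ≤ f y)
    (hc : 0 ≤ c) (hδ : δ ∈ Ico 0 1) (hcf : ∀ y ∈ Ico δ 1, c ≤ f y) (hx : x ∈ Ico 0 1) :
    c * (log (1 - δ) - log (1 - x)) ≤ ∫ y in (0:ℝ)..x, f y / (1 - y) := by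
  have hnonneg : ∀ t ∈ Ico (0:ℝ) 1, 0 ≤ ∫ y in (0:ℝ)..t, f y / (1 - y) := fun t ht =>
    intervalIntegral.integral_nonneg ht.1 fun y hy =>
      div_nonneg (hf0 y ⟨hy.1, hy.2.trans_lt ht.2⟩) (by linarith [hy.2, ht.2])
  rcases le_or_gt x δ with hxδ | hδx
  · have : log (1 - δ) ≤ log (1 - x) := log_le_log (by linarith [hδ.2]) (by linarith)
    nlinarith [hnonneg x hx]
  · rw [← intervalIntegral.integral_add_adjacent_intervals
      (intervalIntegrable_div_one_sub hf one_pos hδ.2)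
      (intervalIntegrable_div_one_sub hf hδ.2 hx.2)]
    linarith [hnonneg δ hδ, le_integral_div_one_sub hf hδx.le hx.2
      fun y hy => hcf y ⟨hy.1, hy.2.trans_lt hx.2⟩]

theorem continuousOn_Cintegrand (hf : Continuous f) : ContinuousOn (Cintegrand f) (Iio 1) := by
  have hcont := continuousOn_div_one_sub hf
  have hprim : ContinuousOn (fun x => ∫ y in (0:ℝ)..x, f y / (1 - y)) (Iio 1) := fun x hx =>
    (intervalIntegral.integral_hasDerivAt_right
      (intervalIntegrable_div_one_sub hf one_pos hx)
      (hcont.stronglyMeasurableAtFilter isOpen_Iio x hx)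
      (hcont.continuousAt (isOpen_Iio.mem_nhds hx))).continuousAt.continuousWithinAt
  have hinv : ContinuousOn (fun x : ℝ => (1 - x)⁻¹) (Iio 1) :=
    (continuousOn_const.sub continuousOn_id).inv₀ fun x hx => (sub_pos.2 hx).ne'
  exact hinv.mul hprim.neg.rexp

theorem Cintegrand_le (hf : Continuous f) (hf0 : ∀ y ∈ Ico 0 1, 0 ≤ f y) (hc : 0 ≤ c)
    (hδ : δ ∈ Ico 0 1) (hcf : ∀ y ∈ Ico δ 1, c ≤ f y) (hx : x ∈ Ico 0 1) :
    Cintegrand f x ≤ (1 - δ) ^ (-c) * (1 - x) ^ (c - 1) := by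
  rw [← inv_one_sub_mul_exp_eq_rpow hx.2 hδ.2]
  exact mul_le_mul_of_nonneg_left
    (exp_le_exp.2 (neg_le_neg (mul_log_sub_le_integral_div_one_sub hf hf0 hc hδ hcf hx)))
    (inv_nonneg.2 (by linarith [hx.2]))

theorem rpow_le_Cintegrand (hf : Continuous f) (hfc : ∀ y ∈ Ico 0 1, f y ≤ c)
    (hx : x ∈ Ico 0 1) : (1 - x) ^ (c - 1) ≤ Cintegrand f x := by
  have h := inv_one_sub_mul_exp_eq_rpow hx.2 one_pos c
  have hG := integral_div_one_sub_le hf hx.1 hx.2 fun y hy => hfc y ⟨hy.1, hy.2.trans_lt hx.2⟩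
  simp only [sub_zero, one_rpow, one_mul] at h hG
  rw [← h]
  exact mul_le_mul_of_nonneg_left (exp_le_exp.2 (neg_le_neg hG))
    (inv_nonneg.2 (by linarith [hx.2]))

theorem intervalIntegrable_Cintegrand (hf : Continuous f) (hf0 : ∀ y ∈ Ico 0 1, 0 ≤ f y)
    (hc : 0 < c) (hδ : δ ∈ Ico 0 1) (hcf : ∀ y ∈ Ico δ 1, c ≤ f y) :
    IntervalIntegrable (Cintegrand f) volume 0 1 := by
  have hbound := (intervalIntegrable_one_sub_rpow hc).const_mul ((1 - δ) ^ (-c))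
  rw [intervalIntegrable_iff_integrableOn_Ioo_of_le zero_le_one] at hbound ⊢
  refine hbound.mono' (((continuousOn_Cintegrand hf).mono fun x hx => hx.2).aestronglyMeasurable
    measurableSet_Ioo) ?_
  filter_upwards [ae_restrict_mem measurableSet_Ioo] with x hx
  rw [Cintegrand, norm_of_nonneg (mul_nonneg (inv_nonneg.2 (sub_nonneg.2 hx.2.le)) (exp_pos _).le)]
  exact Cintegrand_le hf hf0 hc.le hδ hcf (Ioo_subset_Ico_self hx)

theorem integral_Cintegrand_le (hf : Continuous f) (hf0 : ∀ y ∈ Ico 0 1, 0 ≤ f y)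
    (hc : 0 < c) (hδ : δ ∈ Ico 0 1) (hcf : ∀ y ∈ Ico δ 1, c ≤ f y) :
    ∫ x in (0:ℝ)..1, Cintegrand f x ≤ (1 - δ) ^ (-c) / c := by
  calc ∫ x in (0:ℝ)..1, Cintegrand f x
      ≤ ∫ x in (0:ℝ)..1, (1 - δ) ^ (-c) * (1 - x) ^ (c - 1) :=
        intervalIntegral.integral_mono_on_of_le_Ioo zero_le_one
          (intervalIntegrable_Cintegrand hf hf0 hc hδ hcf)
          ((intervalIntegrable_one_sub_rpow hc).const_mul _) fun x hx =>
            Cintegrand_le hf hf0 hc.le hδ hcf (Ioo_subset_Ico_self hx)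
    _ = (1 - δ) ^ (-c) / c := by
        rw [intervalIntegral.integral_const_mul, integral_one_sub_rpow hc, mul_one_div]

theorem one_div_le_integral_Cintegrand (hf : Continuous f) (hc : 0 < c)
    (hfc : ∀ y ∈ Ico 0 1, f y ≤ c) (hint : IntervalIntegrable (Cintegrand f) volume 0 1) :
    1 / c ≤ ∫ x in (0:ℝ)..1, Cintegrand f x := by
  rw [← integral_one_sub_rpow hc]
  exact intervalIntegral.integral_mono_on_of_le_Ioo zero_le_one
    (intervalIntegrable_one_sub_rpow hc) hint fun x hx =>
      rpow_le_Cintegrand hf hfc (Ioo_subset_Ico_self hx)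

end Cintegrand

section Cfun

variable {a β δ κ : ℝ} {b : ℝ → ℝ}

theorem Cfun_eq_integral_Cintegrand :
    Cfun a b β = ∫ x in (0:ℝ)..1, Cintegrand (fun y => b (a * β * y)) x := rfl

theorem MonotoneOn.comp_const_mul (hb : MonotoneOn b (Ici 0)) (hκ : 0 ≤ κ) :
    MonotoneOn (fun y => b (κ * y)) (Ici 0) :=
  hb.comp (fun _ _ _ _ h => mul_le_mul_of_nonneg_left h hκ) fun _ hy => mul_nonneg hκ hy

theorem Cfun_le (ha : 0 < a) (hβ : 0 < β) (hb_cont : Continuous b)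
    (hb_mono : MonotoneOn b (Ici 0)) (hb0 : 0 ≤ b 0) (hb_pos : ∀ x > (0:ℝ), 0 < b x)
    (hδ : δ ∈ Ioo 0 1) :
    Cfun a b β ≤ (1 - δ) ^ (-b (a * δ * β)) / b (a * δ * β) := by
  have hf := hb_mono.comp_const_mul (mul_pos ha hβ).le
  rw [mul_right_comm a δ β, Cfun_eq_integral_Cintegrand]
  exact integral_Cintegrand_le (by fun_prop)
    (fun y hy => hb0.trans (by simpa using hf self_mem_Ici hy.1 hy.1))
    (hb_pos _ (by have := hδ.1; positivity)) (Ioo_subset_Ico_self hδ)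
    fun y hy => hf (mem_Ici.2 hδ.1.le) (mem_Ici.2 (hδ.1.le.trans hy.1)) hy.1

theorem one_div_le_Cfun (ha : 0 < a) (hβ : 0 < β) (hb_cont : Continuous b)
    (hb_mono : MonotoneOn b (Ici 0)) (hb0 : 0 ≤ b 0) (hb_pos : ∀ x > (0:ℝ), 0 < b x) :
    1 / b (a * β) ≤ Cfun a b β := by
  have hf := hb_mono.comp_const_mul (mul_pos ha hβ).le
  have hint : IntervalIntegrable (Cintegrand fun y => b (a * β * y)) volume 0 1 :=
    intervalIntegrable_Cintegrand (by fun_prop)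
      (fun y hy => hb0.trans (by simpa using hf self_mem_Ici hy.1 hy.1))
      (hb_pos (a * β * 2⁻¹) (by positivity)) (δ := 2⁻¹) (by norm_num)
      fun y hy => hf (by norm_num) (mem_Ici.2 (by linarith [hy.1])) hy.1
  rw [Cfun_eq_integral_Cintegrand]
  exact one_div_le_integral_Cintegrand (by fun_prop) (hb_pos _ (by positivity))
    (fun y hy => by simpa using hf hy.1 (mem_Ici.2 zero_le_one) hy.2.le) hint

end Cfun

theorem tendsto_zero_of_tendsto_div_self {b : ℝ → ℝ} {lam : ℝ}
    (hslope : Tendsto (fun x => b x / x) (𝓝[>] 0) (𝓝 lam)) :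
    Tendsto b (𝓝[>] 0) (𝓝 0) := by
  have h := hslope.mul (tendsto_id.mono_left (nhdsWithin_le_nhds (s := Ioi (0:ℝ))))
  rw [mul_zero] at h
  refine h.congr' ?_
  filter_upwards [self_mem_nhdsWithin] with x hx using div_mul_cancel₀ _ (ne_of_gt hx)

theorem tendsto_const_mul_nhdsGT_zero {κ : ℝ} (hκ : 0 < κ) :
    Tendsto (fun β : ℝ => κ * β) (𝓝[>] 0) (𝓝[>] 0) :=
  tendsto_nhdsWithin_of_tendsto_nhds_of_eventually_within _
    ((continuous_const_mul κ).tendsto' 0 0 (mul_zero κ) |>.mono_left nhdsWithin_le_nhds)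
    (by filter_upwards [self_mem_nhdsWithin] with β hβ using mul_pos hκ hβ)

theorem tendsto_div_comp_const_mul {b : ℝ → ℝ} {lam κ : ℝ}
    (hslope : Tendsto (fun x => b x / x) (𝓝[>] 0) (𝓝 lam)) (hlam : lam ≠ 0) (hκ : 0 < κ) :
    Tendsto (fun β => β / b (κ * β)) (𝓝[>] 0) (𝓝 (1 / (lam * κ))) := by
  have h := ((hslope.comp (tendsto_const_mul_nhdsGT_zero hκ)).mul_const κ).inv₀
    (mul_ne_zero hlam hκ.ne')
  rw [← one_div] at h
  refine h.congr' ?_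
  filter_upwards [self_mem_nhdsWithin] with β hβ
  have : β ≠ 0 := ne_of_gt hβ
  simp only [Function.comp_apply]
  field_simp

theorem tendsto_one_sub_rpow_neg_comp_const_mul {b : ℝ → ℝ} {lam κ δ : ℝ}
    (hslope : Tendsto (fun x => b x / x) (𝓝[>] 0) (𝓝 lam)) (hκ : 0 < κ) (hδ : δ < 1) :
    Tendsto (fun β => (1 - δ) ^ (-b (κ * β))) (𝓝[>] 0) (𝓝 1) := by
  have hb := ((tendsto_zero_of_tendsto_div_self hslope).comp
    (tendsto_const_mul_nhdsGT_zero hκ)).neg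
  rw [neg_zero] at hb
  have h := (continuousAt_const_rpow (b := 0) (by linarith : 1 - δ ≠ 0)).tendsto.comp hb
  rwa [rpow_zero] at h

/-- if `b(x)/x → λ ∈ (0,∞)` as `x → 0⁺`, then
`β C(β) → 1/(λ a)` as `β → 0⁺`. -/
theorem betaC_tendsto_of_slope_finite
    (a : ℝ) (ha : 0 < a) (b : ℝ → ℝ)
    (hb_cont : Continuous b) (hb_mono : MonotoneOn b (Set.Ici 0))
    (hb0 : 0 ≤ b 0) (hb_pos : ∀ x > (0:ℝ), 0 < b x)
    (lam : ℝ) (hlam : 0 < lam)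
    (hslope : Tendsto (fun x => b x / x) (nhdsWithin 0 (Set.Ioi 0)) (nhds lam)) :
    Tendsto (fun β => β * Cfun a b β) (nhdsWithin 0 (Set.Ioi 0))
      (nhds (1 / (lam * a))) := by
  refine tendsto_order.2 ⟨fun l hl => ?_, fun u hu => ?_⟩
  · filter_upwards [(tendsto_div_comp_const_mul hslope hlam.ne' ha).eventually (lt_mem_nhds hl),
      self_mem_nhdsWithin] with β hlβ hβ
    rw [div_eq_mul_one_div] at hlβ
    exact hlβ.trans_le (mul_le_mul_of_nonneg_left
      (one_div_le_Cfun ha hβ hb_cont hb_mono hb0 hb_pos) (le_of_lt hβ))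
  · have hlim : Tendsto (fun δ => 1 / (lam * (a * δ))) (𝓝[<] 1) (𝓝 (1 / (lam * a))) := by
      have h : ContinuousAt (fun δ => 1 / (lam * (a * δ))) 1 :=
        continuousAt_const.div (by fun_prop) (by positivity)
      simpa using h.tendsto.mono_left nhdsWithin_le_nhds
    obtain ⟨δ, hδu, hδ⟩ := ((hlim.eventually (gt_mem_nhds hu)).and
      (Ioo_mem_nhdsLT zero_lt_one)).exists
    have hδa : 0 < a * δ := mul_pos ha hδ.1
    have hup := (tendsto_one_sub_rpow_neg_comp_const_mul hslope hδa hδ.2).mul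
      (tendsto_div_comp_const_mul hslope hlam.ne' hδa)
    rw [one_mul] at hup
    filter_upwards [hup.eventually (gt_mem_nhds hδu), self_mem_nhdsWithin] with β huβ hβ
    rw [← mul_div_left_comm] at huβ
    exact (mul_le_mul_of_nonneg_left
      (Cfun_le ha hβ hb_cont hb_mono hb0 hb_pos hδ) (le_of_lt hβ)).trans_lt huβ
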